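/- Let α ≥ ω be a countable ordinal with Cantor normal form α = ω^{β_1}·c_1 + ω^{β_2}·c_2 + … + ω^{β_l}·c_l, where β_1 > β_2 > … > β_l ≥ 0 and 1 ≤ c_i < ω. Then rk(α) = ω·β_1 + ⌊log₂ c_1⌋; in particular, the rank of α as a linear order depends only on the leading term of its Cantor normal form. -/

import Mathlib

open Ordinal

/-- `RkGE α s` means that the rank of `s`, viewed as a linear order in its own right,
is at least `α`.  (`rk(s) ≥ β + 1` iff there is `c ∈ s` such that both
`{y ∈ s | y < c}` and `{y ∈ s | c < y}` have rank at least `β`; the clauses for `0`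
and limit ordinals are folded into the single quantifier `∀ β < α`.) -/
def RkGE {Y : Type*} [LinearOrder Y] : Ordinal → Set Y → Prop :=
  WellFounded.fix (C := fun _ => Set Y → Prop) Ordinal.lt_wf
    (fun α ih s => ∀ β, ∀ hβ : β < α,
      ∃ c ∈ s, ih β hβ {y ∈ s | y < c} ∧ ih β hβ {y ∈ s | c < y})

/-- `S` is a cut of the finite set `F`: a downward-closed (within `F`) subset of `F`.
For `F = {a_0 < … < a_{m-1}}` the cuts are exactly the `m + 1` lower segments of `F`,
and they index the `m + 1` intervals that `F` determines. -/
def IsCut {Y : Type*} [LinearOrder Y] (F S : Set Y) : Prop :=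
  S ⊆ F ∧ ∀ a ∈ F, ∀ b ∈ S, a < b → a ∈ S

/-- The interval of `Y` determined by the cut `S` of `F`: all points lying strictly above
every element of `S` and strictly below every element of `F \\ S`. -/
def cutInterval {Y : Type*} [LinearOrder Y] (F S : Set Y) : Set Y :=
  {y | (∀ a ∈ S, a < y) ∧ ∀ a ∈ F, a ∉ S → y < a}

/-- `RankGE α F` means `rk_Y(F) ≥ α` for a finite subset `F` of the linear order `Y`:
`rk_Y(F) ≥ β + 1` iff every interval determined by `F` contains a point `c` with
`rk_Y(F ∪ {c}) ≥ β` (the clauses for `0` and limits are folded into `∀ β < α`). -/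
def RankGE {Y : Type*} [LinearOrder Y] : Ordinal → Set Y → Prop :=
  WellFounded.fix (C := fun _ => Set Y → Prop) Ordinal.lt_wf
    (fun α ih F => ∀ β, ∀ hβ : β < α, ∀ S : Set Y, IsCut F S →
      ∃ c ∈ cutInterval F S, ih β hβ (insert c F))

theorem rkGE_iff {Y : Type*} [LinearOrder Y] (δ : Ordinal) (s : Set Y) :
    RkGE δ s ↔ ∀ β < δ, ∃ c ∈ s, RkGE β {y ∈ s | y < c} ∧ RkGE β {y ∈ s | c < y} := by
  rw [RkGE, WellFounded.fix_eq]

theorem rkGE_image {Y Z : Type*} [LinearOrder Y] [LinearOrder Z] (g : Y ↪o Z) (δ : Ordinal) :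
    ∀ (s : Set Y), RkGE δ (g '' s) ↔ RkGE δ s := by
  induction δ using Ordinal.induction with
  | _ δ ih =>
    intro s
    have key : ∀ (c : Y), g '' {y ∈ s | y < c} = {z ∈ g '' s | z < g c} := by
      intro c
      ext z
      constructor
      · rintro ⟨y, ⟨hy, hyc⟩, rfl⟩; exact ⟨⟨y, hy, rfl⟩, g.strictMono hyc⟩
      · rintro ⟨⟨y, hy, rfl⟩, hz⟩; exact ⟨y, ⟨hy, g.lt_iff_lt.mp hz⟩, rfl⟩
    have key' : ∀ (c : Y), g '' {y ∈ s | c < y} = {z ∈ g '' s | g c < z} := by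
      intro c
      ext z
      constructor
      · rintro ⟨y, ⟨hy, hyc⟩, rfl⟩; exact ⟨⟨y, hy, rfl⟩, g.strictMono hyc⟩
      · rintro ⟨⟨y, hy, rfl⟩, hz⟩; exact ⟨y, ⟨hy, g.lt_iff_lt.mp hz⟩, rfl⟩
    rw [rkGE_iff, rkGE_iff]
    constructor
    · intro h β hβ
      obtain ⟨c, hc, hl, hr⟩ := h β hβ
      obtain ⟨y, hy, rfl⟩ := hc
      refine ⟨y, hy, ?_, ?_⟩
      · rw [← ih β hβ, key]; exact hl
      · rw [← ih β hβ, key']; exact hr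
    · intro h β hβ
      obtain ⟨c, hc, hl, hr⟩ := h β hβ
      refine ⟨g c, ⟨c, hc, rfl⟩, ?_, ?_⟩
      · rw [← key, ih β hβ]; exact hl
      · rw [← key', ih β hβ]; exact hr



noncomputable def rkf (δ : Ordinal) : Ordinal :=
  if δ < ω then 2 ^ δ - 1 else ω ^ (δ / ω) * 2 ^ (δ % ω)

theorem rkf_nat (n : ℕ) : rkf n = ((2 ^ n - 1 : ℕ) : Ordinal) := by
  rw [rkf, if_pos (nat_lt_omega0 n), Ordinal.natCast_sub, Ordinal.natCast_opow]
  norm_num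

theorem rkf_zero : rkf 0 = 0 := by
  have := rkf_nat 0
  norm_num at this
  simpa using this

theorem omega_div_eq {q r : Ordinal} (hr : r < ω) : (ω * q + r) / ω = q := by
  rw [Ordinal.mul_add_div q omega0_ne_zero, Ordinal.div_eq_zero_of_lt hr, add_zero]

theorem omega_mod_eq {q r : Ordinal} (hr : r < ω) : (ω * q + r) % ω = r := by
  rw [Ordinal.mod_def, omega_div_eq hr, Ordinal.add_sub_cancel]

theorem rkf_of_omega_le {δ : Ordinal} (h : ω ≤ δ) :
    rkf δ = ω ^ (δ / ω) * 2 ^ (δ % ω) := by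
  rw [rkf, if_neg (not_lt.mpr h)]

theorem one_le_div_omega {δ : Ordinal} (h : ω ≤ δ) : 1 ≤ δ / ω := by
  rw [Ordinal.le_div omega0_ne_zero, mul_one]; exact h

theorem omega_le_rkf {δ : Ordinal} (h : ω ≤ δ) : ω ≤ rkf δ := by
  rw [rkf_of_omega_le h]
  calc ω = ω ^ (1 : Ordinal) := (opow_one ω).symm
    _ ≤ ω ^ (δ / ω) := opow_le_opow_right omega0_pos (one_le_div_omega h)
    _ ≤ ω ^ (δ / ω) * 2 ^ (δ % ω) :=
        le_mul_of_one_le_right zero_le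
          (Order.one_le_iff_pos.mpr (opow_pos _ two_pos))

theorem two_opow_lt_omega {r : Ordinal} (hr : r < ω) : (2 : Ordinal) ^ r < ω := by
  obtain ⟨n, rfl⟩ := lt_omega0.mp hr
  have : ((2 ^ n : ℕ) : Ordinal) = (2 : Ordinal) ^ (n : Ordinal) := by
    rw [Ordinal.natCast_opow]; norm_num
  rw [← this]
  exact nat_lt_omega0 _

theorem rkf_lt (δ : Ordinal) : rkf δ < ω ^ (δ / ω + 1) := by
  by_cases h : δ < ω
  · rw [rkf, if_pos h, Ordinal.div_eq_zero_of_lt h, zero_add, opow_one]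
    exact lt_of_le_of_lt (sub_le_self _ _) (two_opow_lt_omega h)
  · rw [rkf, if_neg h, opow_add, opow_one]
    exact mul_lt_mul_of_pos_left (two_opow_lt_omega (mod_lt δ omega0_ne_zero))
      (opow_pos _ omega0_pos)

theorem div_omega_mono {β δ : Ordinal} (h : β ≤ δ) : β / ω ≤ δ / ω := by
  rw [Ordinal.div_le omega0_ne_zero]
  calc β ≤ δ := h
    _ = ω * (δ / ω) + δ % ω := (Ordinal.div_add_mod δ ω).symm
    _ < ω * (δ / ω) + ω := add_lt_add_right (mod_lt δ omega0_ne_zero) _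
    _ = ω * Order.succ (δ / ω) := by rw [mul_succ]

theorem rkf_mono {β δ : Ordinal} (h : β ≤ δ) : rkf β ≤ rkf δ := by
  rcases lt_or_eq_of_le (div_omega_mono h) with hq | hq
  · have hδ : ¬ δ < ω := by
      intro hc
      rw [Ordinal.div_eq_zero_of_lt hc] at hq
      exact not_lt_zero hq
    calc rkf β ≤ ω ^ (β / ω + 1) := (rkf_lt β).le
      _ ≤ ω ^ (δ / ω) := opow_le_opow_right omega0_pos (Order.add_one_le_iff.mpr hq)
      _ ≤ rkf δ := by
          rw [rkf_of_omega_le (not_lt.mp hδ)]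
          exact le_mul_of_one_le_right zero_le
            (Order.one_le_iff_pos.mpr (opow_pos _ two_pos))
  · have hm : β % ω ≤ δ % ω := by
      have h1 := Ordinal.div_add_mod β ω
      have h2 := Ordinal.div_add_mod δ ω
      rw [hq] at h1
      by_contra hcon
      push_neg at hcon
      have : δ < β := by
        calc δ = ω * (δ / ω) + δ % ω := h2.symm
          _ < ω * (δ / ω) + β % ω := add_lt_add_right hcon _
          _ = β := h1
      exact absurd h (not_le.mpr this)
    by_cases hβ : β < ω
    · by_cases hδ : δ < ω
      · obtain ⟨n, rfl⟩ := lt_omega0.mp hβ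
        obtain ⟨m, rfl⟩ := lt_omega0.mp hδ
        rw [rkf_nat, rkf_nat, Nat.cast_le]
        exact Nat.sub_le_sub_right (Nat.pow_le_pow_right (by norm_num)
          (by exact_mod_cast h)) 1
      · calc rkf β ≤ 2 ^ β := by rw [rkf, if_pos hβ]; exact sub_le_self _ _
          _ ≤ ω := (two_opow_lt_omega hβ).le
          _ ≤ rkf δ := omega_le_rkf (not_lt.mp hδ)
    · have hδ : ¬ δ < ω := fun hc => hβ (lt_of_le_of_lt h hc)
      rw [rkf_of_omega_le (not_lt.mp hβ), rkf_of_omega_le (not_lt.mp hδ), hq]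
      exact mul_le_mul_right (opow_le_opow_right two_pos hm) _

theorem rkf_succ (β : Ordinal) : rkf (β + 1) = rkf β + 1 + rkf β := by
  by_cases hβ : β < ω
  · obtain ⟨n, rfl⟩ := lt_omega0.mp hβ
    have hcast : ((n : Ordinal) + 1) = ((n + 1 : ℕ) : Ordinal) := by push_cast; ring_nf
    have h2 : 1 ≤ 2 ^ n := Nat.one_le_two_pow
    have key : (2 ^ (n + 1) - 1 : ℕ) = (2 ^ n - 1) + 1 + (2 ^ n - 1) := by
      have : 2 ^ (n + 1) = 2 * 2 ^ n := by ring
      omega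
    rw [hcast, rkf_nat, rkf_nat, key]
    push_cast
    ring_nf
  · push_neg at hβ
    have hmod : β % ω < ω := mod_lt β omega0_ne_zero
    have hsplit : β + 1 = ω * (β / ω) + (β % ω + 1) := by
      rw [← add_assoc, Ordinal.div_add_mod]
    have hm1 : β % ω + 1 < ω := by
      rw [add_one_eq_succ]
      exact isSuccLimit_omega0.succ_lt hmod
    have hdiv : (β + 1) / ω = β / ω := by rw [hsplit, omega_div_eq hm1]
    have hmod' : (β + 1) % ω = β % ω + 1 := by rw [hsplit, omega_mod_eq hm1]
    have hβ1 : ω ≤ β + 1 := hβ.trans (self_le_add_right β 1)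
    rw [rkf_of_omega_le hβ1, hdiv, hmod', rkf_of_omega_le hβ, opow_add, opow_one, ← mul_assoc]
    have hinf : ω ≤ ω ^ (β / ω) * 2 ^ (β % ω) := by
      rw [← rkf_of_omega_le hβ]; exact omega_le_rkf hβ
    have hX : ∀ X : Ordinal, X * 2 = X + X := fun X => by
      rw [show (2 : Ordinal) = 1 + 1 by norm_num, mul_add, mul_one]
    rw [hX, add_assoc, Ordinal.one_add_of_omega0_le hinf]

theorem mod_omega_of_limit {δ : Ordinal} (h : Order.IsSuccLimit δ) : δ % ω = 0 := by
  have hmod : δ % ω < ω := mod_lt δ omega0_ne_zero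
  obtain ⟨n, hn⟩ := lt_omega0.mp hmod
  cases n with
  | zero => simpa using hn
  | succ m =>
    exfalso
    have hd := Ordinal.div_add_mod δ ω
    rw [hn] at hd
    have hd' : (ω * (δ / ω) + m) + 1 = δ := by
      rw [add_assoc, show ((m : Ordinal) + 1) = ((m + 1 : ℕ) : Ordinal) by push_cast; ring_nf, hd]
    have h1 : ω * (δ / ω) + (m : Ordinal) < δ := by
      conv_rhs => rw [← hd']
      exact lt_add_one _
    have h2 := h.succ_lt h1
    rw [← add_one_eq_succ, hd'] at h2
    exact lt_irrefl _ h2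

theorem rkf_limit {δ : Ordinal} (h : Order.IsSuccLimit δ) : rkf δ = ω ^ (δ / ω) := by
  rw [rkf_of_omega_le (omega0_le_of_isSuccLimit h), mod_omega_of_limit h, opow_zero, mul_one]

theorem rkf_limit_isLimit {δ : Ordinal} (h : Order.IsSuccLimit δ) : Order.IsSuccLimit (rkf δ) := by
  rw [rkf_limit h]
  exact isSuccLimit_opow_left isSuccLimit_omega0
    (fun hc => by simpa [hc] using one_le_div_omega (omega0_le_of_isSuccLimit h))

theorem rkf_cofinal {δ x : Ordinal} (h : Order.IsSuccLimit δ) (hx : x < rkf δ) :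
    ∃ β < δ, x ≤ rkf β := by
  have hq : δ / ω ≠ 0 := fun hc => by
    simpa [hc] using one_le_div_omega (omega0_le_of_isSuccLimit h)
  rw [rkf_limit h] at hx
  obtain ⟨c, hc, n, hn⟩ := (lt_omega0_opow hq).mp hx
  refine ⟨ω * c + n, ?_, ?_⟩
  · calc ω * c + (n : Ordinal) < ω * c + ω := add_lt_add_right (nat_lt_omega0 n) _
      _ = ω * (c + 1) := by rw [mul_add_one]
      _ ≤ ω * (δ / ω) := mul_le_mul_right (Order.add_one_le_iff.mpr hc) _
      _ ≤ δ := Ordinal.mul_div_le δ ω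
  · rcases eq_or_ne c 0 with rfl | hc0
    · rw [opow_zero, one_mul] at hn
      obtain ⟨k, hk⟩ := lt_omega0.mp (hn.trans (nat_lt_omega0 n))
      have hkn : k < n := by rw [hk] at hn; exact_mod_cast hn
      have heq : (ω * 0 + (n : Ordinal)) = ((n : ℕ) : Ordinal) := by simp
      rw [heq, rkf_nat, hk, Nat.cast_le]
      have := Nat.lt_two_pow_self (n := n)
      omega
    · have hcw : ω ≤ ω * c + n :=
        le_trans (by simpa using mul_le_mul_right (Ordinal.one_le_iff_ne_zero.mpr hc0) ω)
          (self_le_add_right _ _)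
      rw [rkf_of_omega_le hcw, omega_div_eq (nat_lt_omega0 n), omega_mod_eq (nat_lt_omega0 n)]
      refine le_trans hn.le (mul_le_mul_right ?_ _)
      have hcast : ((2 ^ n : ℕ) : Ordinal) = (2 : Ordinal) ^ (n : Ordinal) := by
        rw [Ordinal.natCast_opow]; norm_num
      rw [← hcast]
      exact_mod_cast (Nat.lt_two_pow_self (n := n)).le

theorem rkf_eval {β₂ : Ordinal} (hβ₂ : 1 ≤ β₂) (k : ℕ) :
    rkf (ω * β₂ + k) = ω ^ β₂ * 2 ^ (k : Ordinal) := by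
  have hw : ω ≤ ω * β₂ + k :=
    le_trans (by simpa using mul_le_mul_right hβ₂ ω) (self_le_add_right _ _)
  rw [rkf_of_omega_le hw, omega_div_eq (nat_lt_omega0 k), omega_mod_eq (nat_lt_omega0 k)]


theorem rkGE_Ico (δ : Ordinal) : ∀ a b : Ordinal, a + rkf δ ≤ b →
    RkGE δ (Set.Ico a b : Set Ordinal) := by
  induction δ using Ordinal.induction with
  | _ δ ih =>
    intro a b hab
    rw [rkGE_iff]
    intro β hβ
    set c := a + rkf β with hc
    have hsucc : a + rkf (β + 1) ≤ b :=
      le_trans (add_le_add_right (rkf_mono (Order.add_one_le_iff.mpr hβ)) a) hab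
    have hc1b : c + 1 + rkf β ≤ b := by
      rw [rkf_succ] at hsucc
      calc c + 1 + rkf β = a + (rkf β + 1 + rkf β) := by simp only [hc, add_assoc]
        _ ≤ b := hsucc
    have hcb : c < b := by
      have h1 : c < c + 1 + rkf β := by
        calc c = c + 0 := (add_zero c).symm
          _ < c + (1 + rkf β) := add_lt_add_right
              (lt_of_lt_of_le zero_lt_one (self_le_add_right 1 _)) c
          _ = c + 1 + rkf β := by simp only [hc, add_assoc]
      exact lt_of_lt_of_le h1 hc1b
    refine ⟨c, ⟨self_le_add_right a _, hcb⟩, ?_, ?_⟩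
    · have hset : {y ∈ Set.Ico a b | y < c} = Set.Ico a c := by
        ext y
        constructor
        · rintro ⟨⟨h1, _⟩, h3⟩; exact ⟨h1, h3⟩
        · rintro ⟨h1, h3⟩; exact ⟨⟨h1, h3.trans hcb⟩, h3⟩
      rw [hset]
      exact ih β hβ a c (le_of_eq rfl)
    · have hset : {y ∈ Set.Ico a b | c < y} = Set.Ico (c + 1) b := by
        ext y
        constructor
        · rintro ⟨⟨_, h2⟩, h3⟩; exact ⟨Order.add_one_le_iff.mpr h3, h2⟩
        · rintro ⟨h1, h2⟩
          exact ⟨⟨le_trans (self_le_add_right a _) (le_trans (self_le_add_right c 1) h1), h2⟩,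
            Order.add_one_le_iff.mp h1⟩
      rw [hset]
      exact ih β hβ (c + 1) b hc1b

theorem rkGE_le (δ : Ordinal) : ∀ a b : Ordinal, ∀ s : Set Ordinal, s ⊆ Set.Ico a b →
    RkGE δ s → 0 < δ → a + rkf δ ≤ b := by
  induction δ using Ordinal.induction with
  | _ δ ih =>
    intro a b s hs h hδ
    rw [rkGE_iff] at h
    have key : ∀ β < δ, a + rkf (β + 1) ≤ b := by
      intro β hβ
      obtain ⟨c, hc, hl, hr⟩ := h β hβ
      obtain ⟨hac, hcb⟩ := hs hc
      have hleft : a + rkf β ≤ c := by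
        by_cases h0 : 0 < β
        · exact ih β hβ a c {y ∈ s | y < c} (fun y hy => ⟨(hs hy.1).1, hy.2⟩) hl h0
        · push_neg at h0
          rw [nonpos_iff_eq_zero.mp h0, rkf_zero, add_zero]
          exact hac
      have hright : (c + 1) + rkf β ≤ b := by
        by_cases h0 : 0 < β
        · exact ih β hβ (c + 1) b {y ∈ s | c < y}
            (fun y hy => ⟨Order.add_one_le_iff.mpr hy.2, (hs hy.1).2⟩) hr h0
        · push_neg at h0
          rw [nonpos_iff_eq_zero.mp h0, rkf_zero, add_zero]
          exact Order.add_one_le_iff.mpr hcb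
      calc a + rkf (β + 1) = a + rkf β + 1 + rkf β := by
            rw [rkf_succ, ← add_assoc, ← add_assoc]
        _ ≤ c + 1 + rkf β := add_le_add_left (add_le_add_left hleft 1) _
        _ ≤ b := hright
    rcases zero_or_succ_or_isSuccLimit δ with h0 | ⟨β, hδs⟩ | hlim
    · exact absurd h0 hδ.ne'
    · rw [← hδs, ← add_one_eq_succ]
      exact key β (by rw [← hδs]; exact Order.lt_succ β)
    · rw [add_le_iff_of_isSuccLimit (rkf_limit_isLimit hlim)]
      intro x hx
      obtain ⟨β, hβδ, hβ⟩ := rkf_cofinal hlim hx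
      calc a + x ≤ a + rkf β := add_le_add_right hβ a
        _ ≤ a + rkf (β + 1) := add_le_add_right (rkf_mono (self_le_add_right β 1)) a
        _ ≤ b := key β hβδ

theorem rkGE_univ_iff_Iio (α δ : Ordinal) :
    RkGE δ (Set.univ : Set α.ToType) ↔ RkGE δ (Set.Iio α : Set Ordinal) := by
  let e := (Ordinal.ToType.mk : Set.Iio α ≃o α.ToType)
  let g : α.ToType ↪o Ordinal :=
    e.symm.toOrderEmbedding.trans (OrderEmbedding.subtype fun x => x ∈ Set.Iio α)
  have hgy : ∀ y, (g y : Ordinal) = ↑(e.symm y) := fun y => rfl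
  have himg : g '' Set.univ = Set.Iio α := by
    rw [Set.image_univ]
    ext x
    constructor
    · rintro ⟨y, rfl⟩
      rw [hgy y]
      exact (e.symm y).2
    · intro hx
      exact ⟨e ⟨x, hx⟩, by rw [hgy, e.symm_apply_apply]⟩
  rw [← himg, rkGE_image g]

/-- **Rank of countable ordinals** (Theorem 5.16): if `α ≥ ω` is a countable ordinal whose
Cantor normal form has leading term `ω^β₁ · c₁` (so `α = ω^β₁ · c₁ + ρ` with `ρ < ω^β₁`
and `1 ≤ c₁ < ω`), then `rk(α) = ω·β₁ + ⌊log₂ c₁⌋`. -/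
theorem rank_of_countable_ordinal {α β₁ ρ : Ordinal} {c₁ : ℕ}
    (hα : ω ≤ α) (hcnt : α.card ≤ Cardinal.aleph0) (hc : 1 ≤ c₁)
    (hform : α = ω ^ β₁ * c₁ + ρ) (hρ : ρ < ω ^ β₁) :
    RkGE (ω * β₁ + Nat.log 2 c₁) (Set.univ : Set α.ToType) ∧
    ¬ RkGE (ω * β₁ + Nat.log 2 c₁ + 1) (Set.univ : Set α.ToType) := by
  have hβ₁ : 1 ≤ β₁ := by
    by_contra hcon
    push_neg at hcon
    rw [Ordinal.lt_one_iff_zero] at hcon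
    subst hcon
    rw [opow_zero] at hρ hform
    rw [Ordinal.lt_one_iff_zero] at hρ
    rw [hρ, one_mul, add_zero] at hform
    rw [hform] at hα
    exact absurd hα (not_le.mpr (nat_lt_omega0 c₁))
  set k := Nat.log 2 c₁ with hk
  constructor
  · rw [rkGE_univ_iff_Iio]
    have hIio : (Set.Iio α : Set Ordinal) = Set.Ico 0 α := by
      ext y; simp [zero_le]
    rw [hIio]
    apply rkGE_Ico
    rw [zero_add, rkf_eval hβ₁ k]
    have h1 : (2 : Ordinal) ^ (k : Ordinal) = ((2 ^ k : ℕ) : Ordinal) := by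
      rw [Ordinal.natCast_opow]; norm_num
    rw [h1, hform]
    have h2 : ((2 ^ k : ℕ) : Ordinal) ≤ (c₁ : Ordinal) := by
      rw [Nat.cast_le]; exact Nat.pow_log_le_self 2 (by omega)
    exact le_trans (mul_le_mul_right h2 _) (self_le_add_right _ _)
  · intro hcon
    rw [rkGE_univ_iff_Iio] at hcon
    have hpos : (0 : Ordinal) < ω * β₁ + ↑k + 1 :=
      lt_of_le_of_lt (zero_le) (lt_add_one _)
    have hle := rkGE_le (ω * β₁ + ↑k + 1) 0 α (Set.Iio α)
      (fun y hy => ⟨zero_le, hy⟩) hcon hpos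
    rw [zero_add] at hle
    have heval : rkf (ω * β₁ + ↑k + 1) = ω ^ β₁ * ((2 ^ (k + 1) : ℕ) : Ordinal) := by
      have hsplit : ω * β₁ + (k : Ordinal) + 1 = ω * β₁ + ((k + 1 : ℕ) : Ordinal) := by
        push_cast; rw [add_assoc]
      rw [hsplit, rkf_eval hβ₁ (k + 1), Ordinal.natCast_opow]
      norm_num
    rw [heval] at hle
    have hlt : α < ω ^ β₁ * ((2 ^ (k + 1) : ℕ) : Ordinal) := by
      rw [hform]
      calc ω ^ β₁ * ↑c₁ + ρ < ω ^ β₁ * ↑c₁ + ω ^ β₁ := add_lt_add_right hρ _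
        _ = ω ^ β₁ * (↑c₁ + 1) := by rw [mul_add_one]
        _ ≤ ω ^ β₁ * ((2 ^ (k + 1) : ℕ) : Ordinal) := by
            refine mul_le_mul_right ?_ _
            have : c₁ + 1 ≤ 2 ^ (k + 1) :=
              Nat.succ_le_of_lt (Nat.lt_pow_succ_log_self (by norm_num) c₁)
            exact_mod_cast this
    exact absurd hle (not_le.mpr hlt)
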